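/- Let S be a nonempty family of increasing maps ℕ̄ → ℕ̄ (where ℕ̄ = ℕ ∪ {∞}) that is closed under pointwise addition and under composition, and let C_S be the operator-norm closure of ⋃_{s∈S} B_s in B(ℓ²(ℕ)). Then C_S is one of the following four sets: {0}, the compact operators K(ℓ²(ℕ)), C_RC, or B(ℓ²(ℕ)). -/

import Mathlib

noncomputable section

/-- The Hilbert space `ℓ²(ℕ)`. -/
abbrev l2N : Type := lp (fun _ : ℕ => ℂ) 2

/-- The extended-natural cardinality of the support of `ξ ∈ ℓ²(ℕ)`. -/
def suppCard (ξ : l2N) : ℕ∞ := (Function.support (ξ : ∀ _ : ℕ, ℂ)).encard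

/-- The set `B_s` of operators whose support expansion (and that of the adjoint)
is controlled by `s : ℕ̄ → ℕ̄`. -/
def BsetD (s : ℕ∞ → ℕ∞) : Set (l2N →L[ℂ] l2N) :=
  {a | ∀ ξ : l2N, suppCard (a ξ) ≤ s (suppCard ξ) ∧
    suppCard (ContinuousLinearMap.adjoint a ξ) ≤ s (suppCard ξ)}

/-- The matrix entry `a_{n,m} = ⟨a δ_m, δ_n⟩`, i.e. the `n`-th coordinate of `a δ_m`. -/
def entry (a : l2N →L[ℂ] l2N) (n m : ℕ) : ℂ := (a (lp.single 2 m 1)) n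

/-- `a` is uniformly row and column finite. -/
def RCFinite (a : l2N →L[ℂ] l2N) : Prop :=
  ∃ N : ℕ, ∀ m : ℕ,
    {n : ℕ | entry a n m ≠ 0}.encard ≤ (N : ℕ∞) ∧
    {n : ℕ | entry a m n ≠ 0}.encard ≤ (N : ℕ∞)

/-- `C_RC`, the operator-norm closure of the uniformly RC-finite operators. -/
def C_RC : Set (l2N →L[ℂ] l2N) := closure {a | RCFinite a}

/-!
Everything is decided by the values of the maps in `S` at `1` and at finite arguments.
A matrix in `B_s` has at most `s 1` nonzero entries in each row and column, and conversely `N`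
entries per row and column give support expansion at most `N * x`. If every `s ∈ S` satisfies
`s k < k` for some `k`, then no `b ∈ B_s` has a matching of `k` nonzero entries (a generic vector
supported on the `k` columns would be sent onto the `k` rows), and a matrix with finite rows and
columns and no large matching has finitely many nonzero entries, so `b` is compact; conversely the
compressions `P_k b P_k` of a compact `b` to the first `k` coordinates lie in `B_{k • t}` and
converge to `b` in norm. Sums give the multiples `k • t`, and composition turns one infinite
value at a finite argument into `s 1 = ⊤`, where `B_s` is everything.
-/

open scoped InnerProduct ComplexConjugate
open Filter Topology

lemma Set.encard_biUnion_le_mul {ι α : Type*} {t : Set ι} {s : ι → Set α} {N : ℕ∞}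
    (hs : ∀ i ∈ t, (s i).encard ≤ N) : (⋃ i ∈ t, s i).encard ≤ N * t.encard := by
  rcases t.finite_or_infinite with ht | ht
  · calc (⋃ i ∈ t, s i).encard = (⋃ i ∈ ht.toFinset, s i).encard := by simp
      _ ≤ ∑ i ∈ ht.toFinset, (s i).encard := ht.toFinset.set_encard_biUnion_le s
      _ ≤ ∑ _i ∈ ht.toFinset, N := Finset.sum_le_sum fun i hi => hs i (by simpa using hi)
      _ = N * t.encard := by
        rw [Finset.sum_const, nsmul_eq_mul, mul_comm, ht.encard_eq_coe_toFinset_card]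
  · rcases eq_or_ne N 0 with rfl | hN
    · simp_all
    · simp [ht.encard_eq, ENat.mul_top hN]

lemma Module.exists_forall_apply_ne_zero {ι k E : Type*} [Finite ι] [Field k] [Infinite k]
    [AddCommGroup E] [Module k E] {φ : ι → E →ₗ[k] k} (hφ : ∀ i, φ i ≠ 0) :
    ∃ x, ∀ i, φ i x ≠ 0 := by
  by_contra! h
  obtain ⟨i, hi⟩ := Subspace.exists_eq_top_of_iUnion_eq_univ (p := fun i => LinearMap.ker (φ i))
    (Set.eq_univ_of_forall fun x => by simpa using h x)
  exact hφ i (LinearMap.ker_eq_top.mp hi)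

lemma Set.Infinite.exists_matching {α β : Type*} {P : Set (α × β)} (hP : P.Infinite)
    (hrow : ∀ a, (Prod.mk a ⁻¹' P).Finite) (hcol : ∀ b, ((fun a => (a, b)) ⁻¹' P).Finite)
    (k : ℕ) : ∃ M : Finset (α × β), ↑M ⊆ P ∧ M.card = k ∧
      Set.InjOn Prod.fst (M : Set (α × β)) ∧ Set.InjOn Prod.snd (M : Set (α × β)) := by
  classical
  induction k with
  | zero => exact ⟨∅, by simp⟩
  | succ k ih =>
    obtain ⟨M, hMP, hMk, hfst, hsnd⟩ := ih
    -- points of `P` sharing a row or a column with `M` lie in finitely many finite lines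
    have hblocked : {p ∈ P | ∃ q ∈ M, p.1 = q.1 ∨ p.2 = q.2}.Finite := by
      refine ((M.finite_toSet.biUnion fun q _ =>
        ((Set.finite_singleton q.1).prod (hrow q.1)).union
          ((hcol q.2).prod (Set.finite_singleton q.2)))).subset ?_
      rintro ⟨a, b⟩ ⟨hp, q, hq, h | h⟩ <;> simp only at h <;> subst h
      · exact Set.mem_biUnion hq (Or.inl ⟨rfl, hp⟩)
      · exact Set.mem_biUnion hq (Or.inr ⟨hp, rfl⟩)
    obtain ⟨p, hpP, hpfree⟩ := (hP.sdiff hblocked).nonempty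
    simp only [Set.mem_ofPred_eq, hpP, true_and, not_exists, not_and, not_or] at hpfree
    have hpM : p ∉ M := fun h => (hpfree p h).1 rfl
    refine ⟨insert p M, ?_, by rw [Finset.card_insert_of_notMem hpM, hMk], ?_, ?_⟩
    · simpa [Set.insert_subset_iff] using ⟨hpP, hMP⟩
    · rw [Finset.coe_insert, Set.injOn_insert (by simpa using hpM)]
      exact ⟨hfst, fun ⟨q, hq, h⟩ => (hpfree q hq).1 h.symm⟩
    · rw [Finset.coe_insert, Set.injOn_insert (by simpa using hpM)]
      exact ⟨hsnd, fun ⟨q, hq, h⟩ => (hpfree q hq).2 h.symm⟩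

lemma IsCompactOperator.tendsto_comp {𝕜 E F : Type*} [RCLike 𝕜] [NormedAddCommGroup E]
    [NormedSpace 𝕜 E] [NormedAddCommGroup F] [NormedSpace 𝕜 F] {ι : Type*} {l : Filter ι}
    {P : ι → F →L[𝕜] F} (hP : ∀ i y, ‖y - P i y‖ ≤ ‖y‖)
    (hlim : ∀ y, Tendsto (fun i => P i y) l (𝓝 y))
    {c : E →L[𝕜] F} (hc : IsCompactOperator c) : Tendsto (fun i => P i ∘L c) l (𝓝 c) := by
  rw [tendsto_iff_norm_sub_tendsto_zero, Metric.tendsto_nhds]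
  intro ε hε
  obtain ⟨t, htfin, htcov⟩ := Metric.totallyBounded_iff.mp
    (hc.isCompact_closure_image_closedBall 1).totallyBounded (ε / 3) (by positivity)
  filter_upwards [htfin.eventually_all.mpr fun y _ => (tendsto_iff_norm_sub_tendsto_zero.mp
    (hlim y)).eventually (gt_mem_nhds (by positivity : 0 < ε / 3))] with i hi
  rw [dist_zero_right, norm_norm, ← norm_neg, neg_sub]
  refine (ContinuousLinearMap.opNorm_le_of_unit_norm (by positivity) fun x hx => ?_).trans_lt
    (by linarith : 2 * (ε / 3) < ε)
  obtain ⟨y, hyt, hy⟩ := Set.mem_iUnion₂.mp (htcov (subset_closure ⟨x, by simp [hx], rfl⟩))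
  rw [Metric.mem_ball, dist_eq_norm, ContinuousLinearMap.coe_coe] at hy
  have hPy : ‖y - P i y‖ < ε / 3 := by rw [← norm_neg, neg_sub]; exact hi y hyt
  calc ‖(c - P i ∘L c) x‖ = ‖((c x - y) - P i (c x - y)) + (y - P i y)‖ := by
        simp only [sub_apply, ContinuousLinearMap.comp_apply, map_sub]
        abel_nf
    _ ≤ ‖c x - y‖ + ‖y - P i y‖ := (norm_add_le _ _).trans (by gcongr; exact hP i _)
    _ ≤ 2 * (ε / 3) := by linarith

lemma CStarRing.norm_mul_sq_le {A : Type*} [NonUnitalNormedRing A] [StarRing A] [CStarRing A]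
    (b : A) {q : A} (hq : IsSelfAdjoint q) (hq1 : ‖q‖ ≤ 1) :
    ‖b * q‖ ^ 2 ≤ ‖q * (star b * b)‖ :=
  calc ‖b * q‖ ^ 2 = ‖q * (star b * b) * q‖ := by
        rw [sq, ← CStarRing.norm_star_mul_self, star_mul, hq.star_eq]; noncomm_ring
    _ ≤ ‖q * (star b * b)‖ * ‖q‖ := norm_mul_le _ _
    _ ≤ ‖q * (star b * b)‖ := mul_le_of_le_one_right (norm_nonneg _) hq1

lemma ContinuousLinearMap.isCompactOperator_smulRight {𝕜 E F : Type*} [RCLike 𝕜]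
    [NormedAddCommGroup E] [NormedSpace 𝕜 E] [NormedAddCommGroup F] [NormedSpace 𝕜 F]
    (φ : E →L[𝕜] 𝕜) (v : F) : IsCompactOperator (φ.smulRight v) := by
  have : φ.smulRight v = (ContinuousLinearMap.toSpanSingleton 𝕜 v).comp φ := by ext; simp
  rw [this]
  exact (isCompactOperator_of_locallyCompactSpace_rng
    (ContinuousLinearMap.toSpanSingleton 𝕜 v)).comp_clm φ

namespace SuppExp

def δ (m : ℕ) : l2N := lp.single 2 m 1

lemma δ_apply (m n : ℕ) : δ m n = if n = m then 1 else 0 := by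
  simp [δ, lp.single_apply, Pi.single_apply]

lemma inner_δ_left (m : ℕ) (ξ : l2N) : inner ℂ (δ m) ξ = ξ m := by
  simp [δ, lp.inner_single_left]

lemma entry_eq_apply_δ (a : l2N →L[ℂ] l2N) (n m : ℕ) : entry a n m = a (δ m) n := rfl

lemma entry_adjoint (a : l2N →L[ℂ] l2N) (n m : ℕ) : entry (a†) n m = conj (entry a m n) := by
  rw [entry_eq_apply_δ, entry_eq_apply_δ, ← inner_δ_left, ← inner_δ_left,
    ContinuousLinearMap.adjoint_inner_right, inner_conj_symm]

lemma suppCard_δ (m : ℕ) : suppCard (δ m) = 1 := by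
  rw [suppCard, ← Set.encard_singleton m]
  congr 1
  ext n
  simp [δ_apply]

lemma suppCard_eq_zero {ξ : l2N} : suppCard ξ = 0 ↔ ξ = 0 := by
  rw [suppCard, Set.encard_eq_zero, Function.support_eq_empty_iff,
    ← lp.coeFn_zero (E := fun _ : ℕ => ℂ) (p := 2)]
  exact ⟨lp.ext, congrArg _⟩

lemma one_le_suppCard {ξ : l2N} (hξ : ξ ≠ 0) : 1 ≤ suppCard ξ :=
  Order.one_le_iff_ne_zero.mpr (suppCard_eq_zero.not.mpr hξ)

lemma hasSum_apply (a : l2N →L[ℂ] l2N) (ξ : l2N) :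
    HasSum (fun m => ξ m • a (δ m)) (a ξ) := by
  simpa [δ, ← map_smul, ← lp.single_smul] using (lp.hasSum_single (by norm_num) ξ).mapL a

lemma support_apply_subset (a : l2N →L[ℂ] l2N) (ξ : l2N) :
    Function.support (a ξ) ⊆ ⋃ m ∈ Function.support ξ, Function.support (a (δ m)) := by
  intro n hn
  by_contra hnot
  simp only [Set.mem_iUnion₂, Function.mem_support, not_exists, not_not] at hnot
  have hsum : HasSum (fun m => ξ m * a (δ m) n) (a ξ n) :=
    (hasSum_apply a ξ).mapL (lp.evalCLM ℂ (fun _ : ℕ => ℂ) 2 n)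
  refine hn (hsum.unique ?_)
  convert hasSum_zero with m
  by_cases hm : ξ m = 0
  · simp [hm]
  · rw [hnot m hm, mul_zero]

lemma suppCard_apply_le_mul {a : l2N →L[ℂ] l2N} {N : ℕ∞} (hcol : ∀ m, suppCard (a (δ m)) ≤ N)
    (ξ : l2N) : suppCard (a ξ) ≤ N * suppCard ξ :=
  (Set.encard_le_encard (support_apply_subset a ξ)).trans
    (Set.encard_biUnion_le_mul fun m _ => hcol m)

lemma setOf_entry_ne_zero_col (a : l2N →L[ℂ] l2N) (m : ℕ) :
    {n | entry a n m ≠ 0} = Function.support (a (δ m)) := rfl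

lemma setOf_entry_ne_zero_row (a : l2N →L[ℂ] l2N) (n : ℕ) :
    {m | entry a n m ≠ 0} = Function.support ((a†) (δ n)) := by
  ext m
  simp [← entry_eq_apply_δ, entry_adjoint]

def proj (J : Finset ℕ) : l2N →L[ℂ] l2N := ∑ i ∈ J, (innerSL ℂ (δ i)).smulRight (δ i)

lemma proj_apply (J : Finset ℕ) (ξ : l2N) : proj J ξ = ∑ i ∈ J, lp.single 2 i (ξ i) := by
  simp only [proj, sum_apply,
    ContinuousLinearMap.smulRight_apply, innerSL_apply_apply, inner_δ_left]
  simp [δ, ← lp.single_smul]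

lemma proj_apply_apply (J : Finset ℕ) (ξ : l2N) (n : ℕ) :
    proj J ξ n = if n ∈ J then ξ n else 0 := by
  rw [proj_apply, lp.coeFn_sum, Finset.sum_apply]
  simp [lp.single_apply, Pi.single_apply]

lemma proj_δ {J : Finset ℕ} {m : ℕ} (hm : m ∈ J) : proj J (δ m) = δ m := by
  ext n
  simp only [proj_apply_apply, δ_apply]
  split_ifs <;> simp_all

lemma adjoint_proj (J : Finset ℕ) : (proj J)† = proj J := by
  refine ((ContinuousLinearMap.eq_adjoint_iff _ _).mpr fun x y => ?_).symm
  simp only [lp.inner_eq_tsum, proj_apply_apply]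
  congr 1 with n
  split_ifs <;> simp

lemma norm_proj_apply_le (J : Finset ℕ) (ξ : l2N) : ‖proj J ξ‖ ≤ ‖ξ‖ :=
  lp.norm_mono two_ne_zero fun n => by rw [proj_apply_apply]; split_ifs <;> simp

lemma norm_sub_proj_apply_le (J : Finset ℕ) (ξ : l2N) : ‖ξ - proj J ξ‖ ≤ ‖ξ‖ :=
  lp.norm_mono two_ne_zero fun n => by
    rw [lp.coeFn_sub, Pi.sub_apply, proj_apply_apply]; split_ifs <;> simp

lemma tendsto_proj_range (ξ : l2N) :
    Tendsto (fun k => proj (Finset.range k) ξ) atTop (𝓝 ξ) := by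
  simpa only [proj_apply] using (lp.hasSum_single (by norm_num) ξ).tendsto_sum_nat

lemma suppCard_proj_le (J : Finset ℕ) (ξ : l2N) : suppCard (proj J ξ) ≤ J.card := by
  rw [suppCard, ← Set.encard_coe_eq_coe_finsetCard]
  refine Set.encard_le_encard fun n hn => ?_
  by_contra h
  simp only [Function.mem_support, proj_apply_apply] at hn
  split_ifs at hn with hJ
  exacts [h hJ, hn rfl]

lemma isCompactOperator_proj (J : Finset ℕ) : IsCompactOperator (proj J) :=
  (compactOperator (RingHom.id ℂ) l2N l2N).sum_mem fun _ _ =>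
    ContinuousLinearMap.isCompactOperator_smulRight _ _

lemma tendsto_proj_comp (b : l2N →L[ℂ] l2N) (hb : IsCompactOperator b) :
    Tendsto (fun k => proj (Finset.range k) ∘L b) atTop (𝓝 b) :=
  hb.tendsto_comp (fun _ => norm_sub_proj_apply_le _) tendsto_proj_range

lemma tendsto_comp_proj (b : l2N →L[ℂ] l2N) (hb : IsCompactOperator b) :
    Tendsto (fun k => b ∘L proj (Finset.range k)) atTop (𝓝 b) := by
  -- C⋆-identity: `‖b (1 - P)‖ ^ 2 ≤ ‖(1 - P) (b⋆ b)‖`, a left truncation of the compact `b⋆ b`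
  have hq : ∀ k, IsSelfAdjoint (1 - proj (Finset.range k)) := fun k =>
    (IsSelfAdjoint.one _).sub (ContinuousLinearMap.isSelfAdjoint_iff'.mpr (adjoint_proj _))
  have hq1 : ∀ k, ‖(1 : l2N →L[ℂ] l2N) - proj (Finset.range k)‖ ≤ 1 := fun k =>
    ContinuousLinearMap.opNorm_le_bound _ zero_le_one fun ξ => by
      simpa using norm_sub_proj_apply_le (Finset.range k) ξ
  have hbb : Tendsto (fun k => ‖(1 - proj (Finset.range k)) * (star b * b)‖) atTop (𝓝 0) := by
    refine (tendsto_iff_norm_sub_tendsto_zero.mp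
      (tendsto_proj_comp (star b * b) (hb.clm_comp (star b)))).congr fun k => ?_
    rw [norm_sub_rev, sub_mul, one_mul]
    rfl
  rw [tendsto_iff_norm_sub_tendsto_zero]
  refine squeeze_zero (fun k => norm_nonneg _) (fun k => ?_) (by simpa using hbb.sqrt)
  rw [Real.le_sqrt (norm_nonneg _) (norm_nonneg _), norm_sub_rev]
  simpa only [mul_sub, mul_one, ContinuousLinearMap.mul_def] using
    CStarRing.norm_mul_sq_le b (hq k) (hq1 k)

lemma tendsto_proj_comp_comp_proj (b : l2N →L[ℂ] l2N) (hb : IsCompactOperator b) :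
    Tendsto (fun k => proj (Finset.range k) ∘L b ∘L proj (Finset.range k)) atTop (𝓝 b) := by
  rw [tendsto_iff_norm_sub_tendsto_zero]
  refine squeeze_zero (fun _ => norm_nonneg _) (fun k => ?_)
    (by simpa using ((tendsto_iff_norm_sub_tendsto_zero.mp (tendsto_comp_proj b hb)).add
      (tendsto_iff_norm_sub_tendsto_zero.mp (tendsto_proj_comp b hb))))
  set P := proj (Finset.range k)
  have hP : ‖P‖ ≤ 1 := P.opNorm_le_bound zero_le_one fun ξ => by
    simpa using norm_proj_apply_le _ ξ
  calc ‖P ∘L b ∘L P - b‖ = ‖P ∘L (b ∘L P - b) + (P ∘L b - b)‖ := by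
        rw [ContinuousLinearMap.comp_sub]; abel_nf
    _ ≤ ‖P‖ * ‖b ∘L P - b‖ + ‖P ∘L b - b‖ :=
        (norm_add_le _ _).trans (by gcongr; exact P.opNorm_comp_le _)
    _ ≤ ‖b ∘L P - b‖ + ‖P ∘L b - b‖ := by gcongr; exact mul_le_of_le_one_left (norm_nonneg _) hP

lemma BsetD_mono {s t : ℕ∞ → ℕ∞} (hst : s ≤ t) : BsetD s ⊆ BsetD t :=
  fun _ ha ξ => ⟨(ha ξ).1.trans (hst _), (ha ξ).2.trans (hst _)⟩

lemma zero_mem_BsetD (s : ℕ∞ → ℕ∞) : (0 : l2N →L[ℂ] l2N) ∈ BsetD s := fun ξ => by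
  simp [suppCard_eq_zero.mpr]

lemma suppCard_apply_δ_le {s : ℕ∞ → ℕ∞} {b : l2N →L[ℂ] l2N} (hb : b ∈ BsetD s) (m : ℕ) :
    suppCard (b (δ m)) ≤ s 1 :=
  suppCard_δ m ▸ (hb (δ m)).1

lemma suppCard_adjoint_apply_δ_le {s : ℕ∞ → ℕ∞} {b : l2N →L[ℂ] l2N} (hb : b ∈ BsetD s)
    (m : ℕ) : suppCard ((b†) (δ m)) ≤ s 1 :=
  suppCard_δ m ▸ (hb (δ m)).2

lemma eq_zero_of_mem_BsetD {s : ℕ∞ → ℕ∞} (hs : s 1 = 0) {b : l2N →L[ℂ] l2N}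
    (hb : b ∈ BsetD s) : b = 0 := by
  ext1 ξ
  have := suppCard_apply_le_mul (N := 0) (fun m => hs ▸ suppCard_apply_δ_le hb m) ξ
  rwa [zero_mul, nonpos_iff_eq_zero, suppCard_eq_zero] at this

lemma BsetD_eq_univ {s : ℕ∞ → ℕ∞} (hmono : Monotone s) (hs : s 1 = ⊤) : BsetD s = Set.univ := by
  refine Set.eq_univ_of_forall fun b ξ => ?_
  rcases eq_or_ne ξ 0 with rfl | hξ
  · simp [suppCard_eq_zero.mpr]
  · have : s (suppCard ξ) = ⊤ := top_le_iff.mp <| hs ▸ hmono (one_le_suppCard hξ)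
    simp [this]

lemma mem_BsetD_mul {a : l2N →L[ℂ] l2N} {N : ℕ∞} (hcol : ∀ m, suppCard (a (δ m)) ≤ N)
    (hrow : ∀ m, suppCard ((a†) (δ m)) ≤ N) : a ∈ BsetD (N * ·) :=
  fun ξ => ⟨suppCard_apply_le_mul hcol ξ, suppCard_apply_le_mul hrow ξ⟩

lemma RCFinite_iff {a : l2N →L[ℂ] l2N} : RCFinite a ↔
    ∃ N : ℕ, ∀ m, suppCard (a (δ m)) ≤ N ∧ suppCard ((a†) (δ m)) ≤ N := by
  simp only [RCFinite, setOf_entry_ne_zero_col, setOf_entry_ne_zero_row, suppCard]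

lemma RCFinite_of_mem_BsetD {s : ℕ∞ → ℕ∞} (hs : s 1 ≠ ⊤) {b : l2N →L[ℂ] l2N}
    (hb : b ∈ BsetD s) : RCFinite b := by
  lift s 1 to ℕ using hs with N hN
  exact RCFinite_iff.mpr ⟨N, fun m => ⟨hN ▸ suppCard_apply_δ_le hb m,
    hN ▸ suppCard_adjoint_apply_δ_le hb m⟩⟩

lemma mem_BsetD_nsmul {a : l2N →L[ℂ] l2N} {k : ℕ} (ha : ∀ ξ, suppCard (a ξ) ≤ k)
    (ha' : ∀ ξ, suppCard ((a†) ξ) ≤ k) {t : ℕ∞ → ℕ∞} (hmono : Monotone t) (ht : t 1 ≠ 0) :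
    a ∈ BsetD (k • t) := by
  intro ξ
  rcases eq_or_ne ξ 0 with rfl | hξ
  · simp [suppCard_eq_zero.mpr]
  · have : (k : ℕ∞) ≤ (k • t) (suppCard ξ) := by
      rw [Pi.smul_apply, nsmul_eq_mul]
      exact le_mul_of_one_le_right' ((Order.one_le_iff_ne_zero.mpr ht).trans
        (hmono (one_le_suppCard hξ)))
    exact ⟨(ha ξ).trans this, (ha' ξ).trans this⟩

lemma card_le_of_matching {s : ℕ∞ → ℕ∞} {b : l2N →L[ℂ] l2N} (hb : b ∈ BsetD s)
    (hmono : Monotone s) {M : Finset (ℕ × ℕ)} (hfst : Set.InjOn Prod.fst (M : Set (ℕ × ℕ)))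
    (hsnd : Set.InjOn Prod.snd (M : Set (ℕ × ℕ))) (hM : ∀ p ∈ M, entry b p.1 p.2 ≠ 0) :
    (M.card : ℕ∞) ≤ s M.card := by
  set J := M.image Prod.snd
  -- each functional `ξ ↦ b (proj J ξ) p.1` is nonzero at `δ p.2`, so some `ξ` avoids all kernels
  obtain ⟨ξ, hξ⟩ := Module.exists_forall_apply_ne_zero (ι := M)
    (φ := fun p => (lp.evalCLM ℂ (fun _ : ℕ => ℂ) 2 p.1.1 ∘L b ∘L proj J).toLinearMap)
    fun p h => hM p p.2 <| by
      rw [entry_eq_apply_δ, ← proj_δ (Finset.mem_image_of_mem Prod.snd p.2)]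
      exact DFunLike.congr_fun h (δ p.1.2)
  calc (M.card : ℕ∞) = (↑(M.image Prod.fst) : Set ℕ).encard := by
        rw [Set.encard_coe_eq_coe_finsetCard, Finset.card_image_of_injOn hfst]
    _ ≤ suppCard (b (proj J ξ)) := by
        refine Set.encard_le_encard ?_
        simp only [Finset.coe_image, Set.image_subset_iff]
        exact fun p hp => hξ ⟨p, hp⟩
    _ ≤ s (suppCard (proj J ξ)) := (hb _).1
    _ ≤ s M.card := hmono (Finset.card_image_of_injOn hsnd ▸ suppCard_proj_le J ξ)

lemma finite_pattern_of_mem_BsetD {s : ℕ∞ → ℕ∞} {b : l2N →L[ℂ] l2N} (hb : b ∈ BsetD s)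
    (hmono : Monotone s) (hs : s 1 ≠ ⊤) {k : ℕ} (hk : s k < k) :
    {p : ℕ × ℕ | entry b p.1 p.2 ≠ 0}.Finite := by
  by_contra hinf
  have hrow (n : ℕ) : (Prod.mk n ⁻¹' {p : ℕ × ℕ | entry b p.1 p.2 ≠ 0}).Finite := by
    refine Set.encard_lt_top_iff.mp ?_
    change {m | entry b n m ≠ 0}.encard < ⊤
    rw [setOf_entry_ne_zero_row]
    exact (suppCard_adjoint_apply_δ_le hb n).trans_lt hs.lt_top
  have hcol (m : ℕ) : ((·, m) ⁻¹' {p : ℕ × ℕ | entry b p.1 p.2 ≠ 0}).Finite :=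
    Set.encard_lt_top_iff.mp <| (suppCard_apply_δ_le hb m).trans_lt hs.lt_top
  obtain ⟨M, hMP, rfl, hfst, hsnd⟩ := Set.Infinite.exists_matching hinf hrow hcol k
  exact (card_le_of_matching hb hmono hfst hsnd fun p hp => hMP hp).not_gt hk

lemma isCompactOperator_of_finite_pattern {b : l2N →L[ℂ] l2N}
    (h : {p : ℕ × ℕ | entry b p.1 p.2 ≠ 0}.Finite) : IsCompactOperator b := by
  obtain ⟨K, hK⟩ := (h.image Prod.snd).bddAbove
  have hb : b = b ∘L proj (Finset.range (K + 1)) := by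
    ext1 ξ
    rw [ContinuousLinearMap.comp_apply, ← sub_eq_zero, ← map_sub, ← suppCard_eq_zero, suppCard,
      Set.encard_eq_zero, ← Set.subset_empty_iff]
    refine (support_apply_subset _ _).trans (Set.iUnion₂_subset fun m hm n hn => ?_)
    have hmK : K < m := by
      by_contra! hmK
      rw [Function.mem_support, lp.coeFn_sub, Pi.sub_apply, proj_apply_apply,
        if_pos (Finset.mem_range.mpr (Nat.lt_succ_of_le hmK)), sub_self] at hm
      exact hm rfl
    exact hmK.not_ge (hK ⟨(n, m), hn, rfl⟩)
  rw [hb]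
  exact (isCompactOperator_proj _).clm_comp b

lemma suppCard_proj_comp_comp_proj_le (k : ℕ) (b : l2N →L[ℂ] l2N) (ξ : l2N) :
    suppCard ((proj (Finset.range k) ∘L b ∘L proj (Finset.range k)) ξ) ≤ k := by
  simpa using suppCard_proj_le (Finset.range k) _

lemma adjoint_proj_comp_comp_proj (J : Finset ℕ) (b : l2N →L[ℂ] l2N) :
    (proj J ∘L b ∘L proj J)† = proj J ∘L b† ∘L proj J := by
  simp only [ContinuousLinearMap.adjoint_comp, adjoint_proj, ContinuousLinearMap.comp_assoc]

section Family

variable {S : Set (ℕ∞ → ℕ∞)}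

lemma nsmul_mem_of_add_mem (hadd : ∀ s ∈ S, ∀ t ∈ S, (fun n => s n + t n) ∈ S)
    {s : ℕ∞ → ℕ∞} (hs : s ∈ S) {k : ℕ} (hk : k ≠ 0) : k • s ∈ S := by
  obtain ⟨k, rfl⟩ := Nat.exists_eq_succ_of_ne_zero hk
  induction k with
  | zero => simpa using hs
  | succ k ih => rw [succ_nsmul]; exact hadd _ (ih k.succ_ne_zero) _ hs

lemma biUnion_BsetD_eq_zero (hne : S.Nonempty) (h0 : ∀ s ∈ S, s 1 = 0) :
    ⋃ s ∈ S, BsetD s = {0} :=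
  (Set.iUnion₂_subset fun s hs _ hb => eq_zero_of_mem_BsetD (h0 s hs) hb).antisymm
    (Set.singleton_subset_iff.mpr (Set.mem_biUnion hne.some_mem (zero_mem_BsetD _)))

lemma biUnion_BsetD_eq_univ (hmono : ∀ s ∈ S, Monotone s)
    (hadd : ∀ s ∈ S, ∀ t ∈ S, (fun n => s n + t n) ∈ S) (hcomp : ∀ s ∈ S, ∀ t ∈ S, s ∘ t ∈ S)
    {t : ℕ∞ → ℕ∞} (ht : t ∈ S) (ht1 : t 1 ≠ 0) {s : ℕ∞ → ℕ∞} (hs : s ∈ S) {k : ℕ}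
    (hsk : s k = ⊤) : ⋃ s ∈ S, BsetD s = Set.univ := by
  have hu : s ∘ ((k + 1) • t) ∈ S := hcomp s hs _ (nsmul_mem_of_add_mem hadd ht k.succ_ne_zero)
  have hk : (k : ℕ∞) ≤ ((k + 1) • t) 1 := by
    rw [Pi.smul_apply, nsmul_eq_mul, Nat.cast_succ]
    exact le_self_add.trans (le_mul_of_one_le_right' (Order.one_le_iff_ne_zero.mpr ht1))
  have hu1 : (s ∘ ((k + 1) • t)) 1 = ⊤ := top_le_iff.mp (hsk ▸ hmono s hs hk)
  exact Set.eq_univ_of_univ_subset (BsetD_eq_univ (hmono _ hu) hu1 ▸ Set.subset_biUnion_of_mem hu)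

lemma closure_biUnion_BsetD_eq_C_RC (hmono : ∀ s ∈ S, Monotone s)
    (hadd : ∀ s ∈ S, ∀ t ∈ S, (fun n => s n + t n) ∈ S) (hfin : ∀ s ∈ S, s 1 ≠ ⊤)
    {s : ℕ∞ → ℕ∞} (hs : s ∈ S) (hid : ∀ k : ℕ, (k : ℕ∞) ≤ s k) :
    closure (⋃ s ∈ S, BsetD s) = C_RC := by
  have hle : ∀ x, x ≤ s x := fun x =>
    ENat.forall_natCast_le_iff_le.mp fun k hk => (hid k).trans (hmono s hs hk)
  refine (closure_mono ?_).antisymm (closure_minimal ?_ isClosed_closure)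
  · exact Set.iUnion₂_subset fun s hs _ hb => RCFinite_of_mem_BsetD (hfin s hs) hb
  · intro a ha
    obtain ⟨N, hN⟩ := RCFinite_iff.mp ha
    refine subset_closure (Set.mem_biUnion (nsmul_mem_of_add_mem hadd hs N.succ_ne_zero)
      (BsetD_mono (fun x => ?_) (mem_BsetD_mul (fun m => (hN m).1) (fun m => (hN m).2))))
    rw [Pi.smul_apply, nsmul_eq_mul]
    gcongr
    exacts [by simp, hle x]

lemma closure_biUnion_BsetD_eq_compact (hmono : ∀ s ∈ S, Monotone s)
    (hadd : ∀ s ∈ S, ∀ t ∈ S, (fun n => s n + t n) ∈ S) (hfin : ∀ s ∈ S, s 1 ≠ ⊤)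
    (hsmall : ∀ s ∈ S, ∃ k : ℕ, s k < k) {t : ℕ∞ → ℕ∞} (ht : t ∈ S) (ht1 : t 1 ≠ 0) :
    closure (⋃ s ∈ S, BsetD s) = {a : l2N →L[ℂ] l2N | IsCompactOperator a} := by
  refine (closure_minimal ?_ isClosed_setOfPred_isCompactOperator).antisymm fun b hb => ?_
  · refine Set.iUnion₂_subset fun s hs b hb => ?_
    obtain ⟨k, hk⟩ := hsmall s hs
    exact isCompactOperator_of_finite_pattern
      (finite_pattern_of_mem_BsetD hb (hmono s hs) (hfin s hs) hk)
  · refine mem_closure_of_tendsto (tendsto_proj_comp_comp_proj b hb)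
      (eventually_atTop.mpr ⟨1, fun k hk => Set.mem_biUnion
        (nsmul_mem_of_add_mem hadd ht (Nat.one_le_iff_ne_zero.mp hk))
        (mem_BsetD_nsmul (suppCard_proj_comp_comp_proj_le k b) ?_ (hmono t ht) ht1)⟩)
    intro ξ
    rw [adjoint_proj_comp_comp_proj]
    exact suppCard_proj_comp_comp_proj_le k _ ξ

end Family

end SuppExp

open SuppExp in
/-- Every discrete support expansion C*-algebra is one of `{0}`, `K(ℓ²)`, `C_RC`, `B(ℓ²)`. -/
theorem discrete_support_expansion_classification (S : Set (ℕ∞ → ℕ∞)) (hne : S.Nonempty)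
    (hmono : ∀ s ∈ S, Monotone s)
    (hadd : ∀ s ∈ S, ∀ t ∈ S, (fun n => s n + t n) ∈ S)
    (hcomp : ∀ s ∈ S, ∀ t ∈ S, s ∘ t ∈ S) :
    closure (⋃ s ∈ S, BsetD s) = {0} ∨
    closure (⋃ s ∈ S, BsetD s) = {a : l2N →L[ℂ] l2N | IsCompactOperator a} ∨
    closure (⋃ s ∈ S, BsetD s) = C_RC ∨
    closure (⋃ s ∈ S, BsetD s) = Set.univ := by
  by_cases h0 : ∀ s ∈ S, s 1 = 0
  · exact Or.inl (by rw [biUnion_BsetD_eq_zero hne h0, closure_singleton])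
  push Not at h0
  obtain ⟨t, ht, ht1⟩ := h0
  by_cases htop : ∃ s ∈ S, ∃ k : ℕ, s k = ⊤
  · obtain ⟨s, hs, k, hsk⟩ := htop
    refine Or.inr (Or.inr (Or.inr ?_))
    rw [biUnion_BsetD_eq_univ hmono hadd hcomp ht ht1 hs hsk, closure_univ]
  push Not at htop
  have hfin : ∀ s ∈ S, s 1 ≠ ⊤ := fun s hs => by exact_mod_cast htop s hs 1
  by_cases hid : ∃ s ∈ S, ∀ k : ℕ, (k : ℕ∞) ≤ s k
  · obtain ⟨s, hs, hid⟩ := hid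
    exact Or.inr (Or.inr (Or.inl (closure_biUnion_BsetD_eq_C_RC hmono hadd hfin hs hid)))
  push Not at hid
  exact Or.inr (Or.inl (closure_biUnion_BsetD_eq_compact hmono hadd hfin hid ht ht1))
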